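/- Let S be a metric space, (μ_n) Borel probability measures on S converging weakly to μ, (f_n) measurable extended-real-valued functions on S, and (g_n) real-valued measurable functions with f_n ≥ g_n pointwise and the g_n uniformly bounded above by a constant. Then the condition '−∞ < ∫_S limsup_{n→∞, s'→s} g_n(s') dμ(s) ≤ liminf_n ∫ g_n dμ_n' is equivalent to '∫_S limsup_{n→∞, s'→s} g_n(s') dμ(s) = lim_n ∫ g_n dμ_n > −∞' (in particular the limit exists). -/

import Mathlib

open MeasureTheory Filter Topology ENNReal

/-- The positive part of an extended real number, as an element of `ℝ≥0∞`. -/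
noncomputable def eposPart (x : EReal) : ℝ≥0∞ :=
  if x = ⊤ then ⊤ else ENNReal.ofReal x.toReal

/-- The integral of an extended-real-valued function: `∫ f⁺ dμ − ∫ f⁻ dμ`. -/
noncomputable def eintegral {S : Type*} [MeasurableSpace S]
    (μ : MeasureTheory.Measure S) (f : S → EReal) : EReal :=
  ((∫⁻ s, eposPart (f s) ∂μ : ℝ≥0∞) : EReal) -
    ((∫⁻ s, eposPart (-f s) ∂μ : ℝ≥0∞) : EReal)

/-- The integral of an extended-real-valued function `f` is defined when
`min(∫ f⁺ dμ, ∫ f⁻ dμ) < ∞`. -/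
def EIntegralDefined {S : Type*} [MeasurableSpace S]
    (μ : MeasureTheory.Measure S) (f : S → EReal) : Prop :=
  (∫⁻ s, eposPart (f s) ∂μ) ≠ ⊤ ∨ (∫⁻ s, eposPart (-f s) ∂μ) ≠ ⊤

/-! Writing `g n = K - H n` with `H n ≥ 0` (after raising `K` to `max K 0`), the joint `limsup` of
the `g n` becomes `K` minus the joint `liminf` of the `H n`, and every integral of a `g n` becomes
`K` minus a lower Lebesgue integral. The joint `liminf` of the `H n` is the increasing limit of the
lower semicontinuous functions `s ↦ liminf_{n ≥ m, s' → s} H n s'`, and the layer-cake formula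
turns the portmanteau bound `μ G ≤ liminf μ_n G` on open sets into Fatou's lemma
`∫ liminf_{n, s' → s} H n s' dμ ≤ liminf ∫ H n dμ_n`. Hence `limsup ∫ g n dμ_n ≤ ∫ limsup g dμ`,
and against this upper bound `∫ limsup g dμ ≤ liminf ∫ g n dμ_n` says exactly that the integrals
converge to `∫ limsup g dμ`. -/

theorem EReal.coe_ennreal_sub_eq_of_add_eq {a b c d : ℝ≥0∞} (ha : a ≠ ⊤) (hc : c ≠ ⊤)
    (h : a + d = c + b) : (a : EReal) - b = c - d := by
  lift a to NNReal using ha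
  lift c to NNReal using hc
  by_cases hb : b = ⊤
  · have hd : d = ⊤ := by simpa [hb] using h
    simp [hb, hd]
  · have hd : d ≠ ⊤ := by
      rintro rfl
      exact hb (by simpa [eq_comm] using h)
    lift b to NNReal using hb
    lift d to NNReal using hd
    have h' : (a : ℝ) + d = c + b := by exact_mod_cast h
    simp only [EReal.coe_nnreal_eq_coe_real]
    exact_mod_cast (by linarith : (a : ℝ) - b = c - d)

theorem EReal.continuous_coe_sub (K : ℝ) : Continuous fun x : EReal => (K : EReal) - x := by
  have hadd : Continuous fun y : EReal => (K : EReal) + y :=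
    continuous_iff_continuousAt.2 fun y =>
      (EReal.continuousAt_add (p := ((K : EReal), y)) (.inl (EReal.coe_ne_top K))
        (.inl (EReal.coe_ne_bot K))).comp (continuousAt_const.prodMk continuousAt_id)
  simp_rw [sub_eq_add_neg]
  exact hadd.comp continuous_neg

theorem EReal.limsup_coe_sub_coe_ennreal {ι : Type*} {F : Filter ι} [F.NeBot] (K : ℝ)
    (u : ι → ℝ≥0∞) : limsup (fun i => (K : EReal) - u i) F = K - liminf u F := by
  exact (Antitone.map_liminf_of_continuousAt (f := fun x : ℝ≥0∞ => (K : EReal) - x)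
    (fun x y hxy => EReal.sub_le_sub le_rfl (EReal.coe_ennreal_le_coe_ennreal_iff.2 hxy)) u
    ((EReal.continuous_coe_sub K).comp continuous_coe_ennreal_ereal).continuousAt).symm

-- `eposPart` is definitionally Mathlib's `EReal.toENNReal`.
theorem eintegral_eq_toENNReal_sub {S : Type*} [MeasurableSpace S] (μ : Measure S)
    (f : S → EReal) :
    eintegral μ f = (∫⁻ s, (f s).toENNReal ∂μ : ℝ≥0∞) - (∫⁻ s, (-f s).toENNReal ∂μ : ℝ≥0∞) :=
  rfl

theorem eintegral_const_sub {S : Type*} [MeasurableSpace S] (ν : Measure S)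
    [IsProbabilityMeasure ν]
    {K : ℝ} (hK : 0 ≤ K) {L : S → ℝ≥0∞} (hL : Measurable L) :
    eintegral ν (fun s => (K : EReal) - L s) = K - ∫⁻ s, L s ∂ν := by
  set c := ENNReal.ofReal K
  have hcK : (c : EReal) = K := by simp [c, EReal.coe_ennreal_ofReal, hK]
  have hc_ne_top : c ≠ ⊤ := ofReal_ne_top
  have hpos : ∀ s, ((c : EReal) - L s).toENNReal = c - L s := fun s => by
    rw [EReal.toENNReal_sub (EReal.coe_ennreal_nonneg _), EReal.toENNReal_coe, EReal.toENNReal_coe]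
  have hneg : ∀ s, (-((c : EReal) - L s)).toENNReal = L s - c := fun s => by
    rw [EReal.neg_sub (.inl (EReal.coe_ennreal_ne_bot c))
        (.inl (EReal.coe_ennreal_eq_top_iff.not.mpr hc_ne_top)),
      add_comm, ← sub_eq_add_neg, EReal.toENNReal_sub (EReal.coe_ennreal_nonneg _),
      EReal.toENNReal_coe, EReal.toENNReal_coe]
  rw [← hcK, eintegral_eq_toENNReal_sub]
  simp only [hpos, hneg]
  have hc : ∫⁻ _, c ∂ν = c := by simp
  refine EReal.coe_ennreal_sub_eq_of_add_eq (ne_top_of_le_ne_top hc_ne_top ?_) hc_ne_top ?_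
  · calc ∫⁻ s, c - L s ∂ν ≤ ∫⁻ _, c ∂ν := lintegral_mono fun s => tsub_le_self
      _ = c := hc
  · calc ∫⁻ s, c - L s ∂ν + ∫⁻ s, L s ∂ν = ∫⁻ s, (c - L s + L s) ∂ν :=
          (lintegral_add_right _ hL).symm
      _ = ∫⁻ s, (c + (L s - c)) ∂ν := by simp_rw [tsub_add_eq_max, add_tsub_eq_max]
      _ = c + ∫⁻ s, L s - c ∂ν := by rw [lintegral_add_left measurable_const, hc]

theorem Filter.liminf_iInf_of_directed {α β ι : Type*} [CompleteLattice α] [Nonempty ι]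
    {F : ι → Filter β} (hF : Directed (· ≥ ·) F) (u : β → α) :
    liminf u (⨅ i, F i) = ⨆ i, liminf u (F i) := by
  simp only [liminf_eq_iSup_iInf, mem_iInf_of_directed hF, iSup_exists]
  exact iSup_comm

theorem Filter.Eventually.eventually_prod_nhds {ι X : Type*} [TopologicalSpace X] {l : Filter ι}
    {x : X} {P : ι × X → Prop} (h : ∀ᶠ p in l ×ˢ 𝓝 x, P p) :
    ∀ᶠ y in 𝓝 x, ∀ᶠ p in l ×ˢ 𝓝 y, P p := by
  obtain ⟨A, hA, B, hB, hAB⟩ := mem_prod_iff.1 h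
  filter_upwards [eventually_eventually_nhds.2 hB] with y hy
  exact mem_prod_iff.2 ⟨A, hA, B, hy, hAB⟩

theorem lowerSemicontinuous_liminf_prod_nhds {ι X α : Type*} [TopologicalSpace X]
    [CompleteLinearOrder α] (l : Filter ι) (H : ι × X → α) :
    LowerSemicontinuous fun x => liminf H (l ×ˢ 𝓝 x) := by
  intro x t (ht : t < liminf H (l ×ˢ 𝓝 x))
  show ∀ᶠ y in 𝓝 x, t < liminf H (l ×ˢ 𝓝 y)
  rw [liminf_eq_iSup_iInf] at ht
  obtain ⟨A, hA⟩ := lt_iSup_iff.1 ht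
  obtain ⟨hAx, hA⟩ := lt_iSup_iff.1 hA
  filter_upwards [Filter.Eventually.eventually_prod_nhds hAx] with y hAy
  rw [liminf_eq_iSup_iInf]
  exact hA.trans_le (le_iSup₂ (f := fun s _ => ⨅ a ∈ s, H a) A hAy)

section Portmanteau
variable {Ω : Type*} [MeasurableSpace Ω] [TopologicalSpace Ω] [OpensMeasurableSpace Ω]
  {μ : Measure Ω} {μs : ℕ → Measure Ω}

theorem LowerSemicontinuous.lintegral_ofReal_le_liminf_lintegral {f : Ω → ℝ}
    (hf : LowerSemicontinuous f) (f_nn : 0 ≤ f)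
    (h_opens : ∀ G, IsOpen G → μ G ≤ atTop.liminf (fun i => μs i G)) :
    ∫⁻ x, ENNReal.ofReal (f x) ∂μ ≤ atTop.liminf (fun i => ∫⁻ x, ENNReal.ofReal (f x) ∂(μs i)) := by
  simp_rw [lintegral_eq_lintegral_meas_lt _ (Eventually.of_forall f_nn) hf.measurable.aemeasurable]
  calc ∫⁻ t in Set.Ioi 0, μ {x | t < f x}
      ≤ ∫⁻ t in Set.Ioi 0, atTop.liminf (fun i => μs i {x | t < f x}) :=
        lintegral_mono fun t => h_opens _ (hf.isOpen_preimage t)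
    _ ≤ atTop.liminf (fun i => ∫⁻ t in Set.Ioi 0, μs i {x | t < f x}) :=
        lintegral_liminf_le fun i => Antitone.measurable fun _ _ hst =>
          measure_mono fun _ hx => hst.trans_lt hx

theorem LowerSemicontinuous.lintegral_le_liminf_lintegral {w : Ω → ℝ≥0∞}
    (hw : LowerSemicontinuous w)
    (h_opens : ∀ G, IsOpen G → μ G ≤ atTop.liminf (fun i => μs i G)) :
    ∫⁻ x, w x ∂μ ≤ atTop.liminf (fun i => ∫⁻ x, w x ∂(μs i)) := by
  have h_trunc (c : ℕ) : ∫⁻ x, min (c : ℝ≥0∞) (w x) ∂μ ≤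
      atTop.liminf (fun i => ∫⁻ x, min (c : ℝ≥0∞) (w x) ∂(μs i)) := by
    have hc : (c : ℝ≥0∞) ≠ ⊤ := natCast_ne_top c
    have h_ofReal (y : ℝ≥0∞) : ENNReal.ofReal (truncateToReal c y) = min (c : ℝ≥0∞) y :=
      ofReal_toReal (ne_top_of_le_ne_top hc (min_le_left _ _))
    have h_lsc : LowerSemicontinuous (truncateToReal c ∘ w) :=
      (continuous_truncateToReal hc).comp_lowerSemicontinuous hw (monotone_truncateToReal hc)
    simpa only [Function.comp_apply, h_ofReal] using
      h_lsc.lintegral_ofReal_le_liminf_lintegral (fun _ => truncateToReal_nonneg) h_opens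
  calc ∫⁻ x, w x ∂μ = ⨆ c : ℕ, ∫⁻ x, min (c : ℝ≥0∞) (w x) ∂μ := by
        rw [← lintegral_iSup (fun c => measurable_const.min hw.measurable)
          (fun c c' hcc' x => min_le_min_right _ (Nat.cast_le.2 hcc'))]
        simp_rw [← iSup_inf_eq, iSup_natCast, top_inf_eq]
    _ ≤ _ := iSup_le fun c => (h_trunc c).trans <| liminf_le_liminf <|
        .of_forall fun i => lintegral_mono fun x => min_le_right _ _

theorem lintegral_liminf_prod_nhds_le_liminf_lintegral
    (h_opens : ∀ G, IsOpen G → μ G ≤ atTop.liminf (fun i => μs i G)) (H : ℕ × Ω → ℝ≥0∞) :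
    ∫⁻ x, liminf H (atTop ×ˢ 𝓝 x) ∂μ ≤ atTop.liminf (fun n => ∫⁻ x, H (n, x) ∂(μs n)) := by
  set L : ℕ → Ω → ℝ≥0∞ := fun m x => liminf H (𝓟 (Set.Ici m) ×ˢ 𝓝 x)
  have h_anti (x : Ω) : Antitone fun m : ℕ => 𝓟 (Set.Ici m) ×ˢ 𝓝 x := fun m m' hmm' =>
    prod_mono (principal_mono.2 (Set.Ici_subset_Ici.2 hmm')) le_rfl
  have hL_mono : Monotone L := fun m m' hmm' x => liminf_le_liminf_of_le (h_anti x hmm')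
  have hL_sup (x : Ω) : liminf H (atTop ×ˢ 𝓝 x) = ⨆ m, L m x := by
    rw [show (atTop : Filter ℕ) = ⨅ m, 𝓟 (Set.Ici m) from rfl, prod_iInf_left,
      liminf_iInf_of_directed (h_anti x).directed_ge]
  have hL_le {m n : ℕ} (hmn : m ≤ n) (x : Ω) : L m x ≤ H (n, x) := by
    have hpure : pure (n, x) ≤ 𝓟 (Set.Ici m) ×ˢ 𝓝 x := by
      rw [← prod_pure_pure]
      exact prod_mono ((pure_le_principal _).2 hmn) (pure_le_nhds x)
    exact liminf_le_of_frequently_le' (Frequently.filter_mono (frequently_pure.2 le_rfl) hpure)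
  have hL_lsc (m : ℕ) : LowerSemicontinuous (L m) := lowerSemicontinuous_liminf_prod_nhds _ H
  calc ∫⁻ x, liminf H (atTop ×ˢ 𝓝 x) ∂μ = ⨆ m, ∫⁻ x, L m x ∂μ := by
        simp_rw [hL_sup]
        exact lintegral_iSup (fun m => (hL_lsc m).measurable) hL_mono
    _ ≤ _ := iSup_le fun m => ((hL_lsc m).lintegral_le_liminf_lintegral h_opens).trans <|
        liminf_le_liminf <| (eventually_ge_atTop m).mono fun n hn => lintegral_mono (hL_le hn)

end Portmanteau

theorem le_liminf_measure_open_of_forall_integral_tendsto {Ω : Type*} [MeasurableSpace Ω]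
    [TopologicalSpace Ω] [OpensMeasurableSpace Ω] [HasOuterApproxClosed Ω]
    {μs : ℕ → Measure Ω} {μ : Measure Ω} [∀ n, IsProbabilityMeasure (μs n)]
    [IsProbabilityMeasure μ]
    (hweak : ∀ h : Ω → ℝ, Continuous h → (∃ C : ℝ, ∀ x, |h x| ≤ C) →
      Tendsto (fun n => ∫ x, h x ∂(μs n)) atTop (𝓝 (∫ x, h x ∂μ)))
    {G : Set Ω} (hG : IsOpen G) :
    μ G ≤ atTop.liminf (fun n => μs n G) := by
  let P : ProbabilityMeasure Ω := ⟨μ, inferInstance⟩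
  let Ps : ℕ → ProbabilityMeasure Ω := fun n => ⟨μs n, inferInstance⟩
  have hPs : Tendsto Ps atTop (𝓝 P) :=
    ProbabilityMeasure.tendsto_iff_forall_integral_tendsto.2 fun h =>
      hweak h h.continuous
        ⟨‖h‖, fun x => (Real.norm_eq_abs _).symm.trans_le (h.norm_coe_le_norm x)⟩
  exact ProbabilityMeasure.le_liminf_measure_open_of_tendsto hPs hG

theorem condition_equiv_limit_exists_general
    {S : Type*} [MetricSpace S] [MeasurableSpace S] [BorelSpace S]
    (μs : ℕ → Measure S) (μ : Measure S)
    [∀ n, IsProbabilityMeasure (μs n)] [IsProbabilityMeasure μ]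
    (hweak : ∀ h : S → ℝ, Continuous h → (∃ C : ℝ, ∀ s, |h s| ≤ C) →
      Tendsto (fun n => ∫ s, h s ∂(μs n)) atTop (𝓝 (∫ s, h s ∂μ)))
    (g : ℕ → S → ℝ) (hg : ∀ n, Measurable (g n))
    (K : ℝ) (hK : ∀ n s, g n s ≤ K) :
    ((⊥ < eintegral μ
        (fun s => limsup (fun p : ℕ × S => (g p.1 p.2 : EReal)) (atTop ×ˢ 𝓝 s)) ∧
      eintegral μ
          (fun s => limsup (fun p : ℕ × S => (g p.1 p.2 : EReal)) (atTop ×ˢ 𝓝 s)) ≤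
        liminf (fun n => eintegral (μs n) (fun s => (g n s : EReal))) atTop)
      ↔
    (⊥ < eintegral μ
        (fun s => limsup (fun p : ℕ × S => (g p.1 p.2 : EReal)) (atTop ×ˢ 𝓝 s)) ∧
      Tendsto (fun n => eintegral (μs n) (fun s => (g n s : EReal))) atTop
        (𝓝 (eintegral μ
          (fun s => limsup (fun p : ℕ × S => (g p.1 p.2 : EReal)) (atTop ×ˢ 𝓝 s)))))) := by
  set K₀ := max K 0
  have hK₀ : 0 ≤ K₀ := le_max_right K 0
  set H : ℕ × S → ℝ≥0∞ := fun p => ENNReal.ofReal (K₀ - g p.1 p.2)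
  have hgH (n : ℕ) (s : S) : (g n s : EReal) = K₀ - H (n, s) := by
    have hnn : 0 ≤ K₀ - g n s := sub_nonneg.2 ((hK n s).trans (le_max_left K 0))
    rw [EReal.coe_ennreal_ofReal, max_eq_left hnn, ← EReal.coe_sub, sub_sub_cancel K₀ (g n s)]
  have hG : (fun s => limsup (fun p : ℕ × S => (g p.1 p.2 : EReal)) (atTop ×ˢ 𝓝 s)) =
      fun s => (K₀ : EReal) - liminf H (atTop ×ˢ 𝓝 s) := by
    simp_rw [hgH]
    exact funext fun s => EReal.limsup_coe_sub_coe_ennreal K₀ H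
  have he : (fun n => eintegral (μs n) (fun s => (g n s : EReal))) =
      fun n => (K₀ : EReal) - (∫⁻ s, H (n, s) ∂(μs n) : ℝ≥0∞) := by
    simp_rw [hgH]
    exact funext fun n => eintegral_const_sub _ hK₀ (measurable_const.sub (hg n)).ennreal_ofReal
  have hlimsup : limsup (fun n => eintegral (μs n) (fun s => (g n s : EReal))) atTop ≤
      eintegral μ (fun s => limsup (fun p : ℕ × S => (g p.1 p.2 : EReal)) (atTop ×ˢ 𝓝 s)) := by
    rw [hG, he, EReal.limsup_coe_sub_coe_ennreal,
      eintegral_const_sub μ hK₀ (lowerSemicontinuous_liminf_prod_nhds _ H).measurable]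
    exact EReal.sub_le_sub le_rfl <| EReal.coe_ennreal_le_coe_ennreal_iff.2 <|
      lintegral_liminf_prod_nhds_le_liminf_lintegral
        (fun G hG => le_liminf_measure_open_of_forall_integral_tendsto hweak hG) H
  exact and_congr_right fun _ =>
    ⟨fun h => tendsto_of_le_liminf_of_limsup_le h hlimsup, fun h => h.liminf_eq.ge⟩

/-- For weakly converging probability measures and functions `g_n` uniformly
bounded above, the condition
`−∞ < ∫ limsup_{n,s'→s} g_n dμ ≤ liminf_n ∫ g_n dμ_n` is equivalent to
`∫ limsup_{n,s'→s} g_n dμ = lim_n ∫ g_n dμ_n > −∞` (in particular the limit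
exists). -/
theorem condition_equiv_limit_exists
    {S : Type*} [MetricSpace S] [MeasurableSpace S] [BorelSpace S]
    (μs : ℕ → Measure S) (μ : Measure S)
    [∀ n, IsProbabilityMeasure (μs n)] [IsProbabilityMeasure μ]
    (hweak : ∀ h : S → ℝ, Continuous h → (∃ C : ℝ, ∀ s, |h s| ≤ C) →
      Tendsto (fun n => ∫ s, h s ∂(μs n)) atTop (𝓝 (∫ s, h s ∂μ)))
    (f : ℕ → S → EReal) (hf : ∀ n, Measurable (f n))
    (g : ℕ → S → ℝ) (hg : ∀ n, Measurable (g n))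
    (hfg : ∀ n s, (g n s : EReal) ≤ f n s)
    (K : ℝ) (hK : ∀ n s, g n s ≤ K) :
    ((⊥ < eintegral μ
        (fun s => limsup (fun p : ℕ × S => (g p.1 p.2 : EReal)) (atTop ×ˢ 𝓝 s)) ∧
      eintegral μ
          (fun s => limsup (fun p : ℕ × S => (g p.1 p.2 : EReal)) (atTop ×ˢ 𝓝 s)) ≤
        liminf (fun n => eintegral (μs n) (fun s => (g n s : EReal))) atTop)
      ↔
    (⊥ < eintegral μ
        (fun s => limsup (fun p : ℕ × S => (g p.1 p.2 : EReal)) (atTop ×ˢ 𝓝 s)) ∧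
      Tendsto (fun n => eintegral (μs n) (fun s => (g n s : EReal))) atTop
        (𝓝 (eintegral μ
          (fun s => limsup (fun p : ℕ × S => (g p.1 p.2 : EReal)) (atTop ×ˢ 𝓝 s)))))) :=
  condition_equiv_limit_exists_general μs μ hweak g hg K hK
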